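/- Let X be a proper δ-hyperbolic geodesic space that is visual with constant C and basepoint w, and suppose |∂X| ≥ 2. Then X is taut: there exists C' < ∞ such that for every point x ∈ X ∪ ∂X and every y ∈ X there is a geodesic (segment, ray, or line) emanating from x passing within distance C' of y. -/

import Mathlib

/-! Fix two non-asymptotic rays `γ₁, γ₂` from the basepoint `w`; by thinness, beyond some time
`K` the ray `γ₁` stays more than `2δ` away from `γ₂`. Given `x` and `y`, visibility puts `y` near a
ray `c` from `w`. For large `n`, the triangle `w, c n, x` puts `y` near `[x, c n]` or near a point
`z` of `[w, x]`, and the triangles `w, x, γᵢ n` put `z` near `[x, γ₁ n] ∪ [x, γ₂ n]`: either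
directly, or `z` is near both rays, hence near `w`, and `w` is near `[γ₁ n, γ₂ n]`, hence near
`[x, γ₁ n] ∪ [x, γ₂ n]`. By properness the segments `[x, Y n]` converge along an ultrafilter on `ℕ`
to a ray from `x`, and being near `y` passes to the limit. Rays asymptotic to a given ray are
obtained as such limits as well. -/

open Metric Set

/-- The Gromov product `(y|z)_x`. -/
noncomputable def gromovProd {X : Type*} [MetricSpace X] (x y z : X) : ℝ :=
  (dist x y + dist x z - dist y z) / 2

/-- A unit-speed geodesic from `x` to `y`, defined on `[0, dist x y]`. -/
def IsGeodesicSeg {X : Type*} [MetricSpace X] (f : ℝ → X) (x y : X) : Prop :=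
  f 0 = x ∧ f (dist x y) = y ∧
    ∀ s ∈ Set.Icc (0:ℝ) (dist x y), ∀ t ∈ Set.Icc (0:ℝ) (dist x y),
      dist (f s) (f t) = |s - t|

/-- A geodesic metric space: any two points are joined by a geodesic. -/
def GeodesicSpace (X : Type*) [MetricSpace X] : Prop :=
  ∀ x y : X, ∃ f : ℝ → X, IsGeodesicSeg f x y

/-- A unit-speed geodesic ray, defined on `[0, ∞)`. -/
def IsGeodesicRay {X : Type*} [MetricSpace X] (c : ℝ → X) : Prop :=
  ∀ s ∈ Set.Ici (0:ℝ), ∀ t ∈ Set.Ici (0:ℝ), dist (c s) (c t) = |s - t|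

/-- Two geodesic rays are asymptotic if one stays at bounded distance from the other. -/
def AsympRays {X : Type*} [MetricSpace X] (c c' : ℝ → X) : Prop :=
  ∃ K : ℝ, ∀ t, 0 ≤ t → ∃ s, 0 ≤ s ∧ dist (c t) (c' s) ≤ K

/-- δ-hyperbolicity in the "equiradial" sense: on a geodesic triangle with vertices
`x,y,z`, points on the sides `[x,y]` and `[x,z]` that are equidistant from `x`, at distance
at most the Gromov product `(y|z)_x`, are at distance at most δ. -/
def GromovThin (X : Type*) [MetricSpace X] (δ : ℝ) : Prop :=
  ∀ (x y z : X) (f g : ℝ → X), IsGeodesicSeg f x y → IsGeodesicSeg g x z →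
    ∀ s : ℝ, 0 ≤ s → s ≤ gromovProd x y z → dist (f s) (g s) ≤ δ

/-- δ-thin triangles: each side of a geodesic triangle lies in the closed δ-neighborhood
of the union of the other two sides. -/
def ThinTriangles (X : Type*) [MetricSpace X] (δ : ℝ) : Prop :=
  ∀ (x y z : X) (fxy fyz fxz : ℝ → X),
    IsGeodesicSeg fxy x y → IsGeodesicSeg fyz y z → IsGeodesicSeg fxz x z →
    ∀ p ∈ fxy '' Set.Icc (0:ℝ) (dist x y),
      ∃ q ∈ (fyz '' Set.Icc (0:ℝ) (dist y z)) ∪ (fxz '' Set.Icc (0:ℝ) (dist x z)),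
        dist p q ≤ δ

open Filter Topology

lemma IsCompact.exists_tendsto_ultrafilter {Y ι : Type*} [TopologicalSpace Y] {s : Set Y}
    (hs : IsCompact s) (u : Ultrafilter ι) {g : ι → Y} (hg : ∀ᶠ i in u, g i ∈ s) :
    ∃ a ∈ s, Tendsto g u (𝓝 a) :=
  hs.ultrafilter_le_nhds' (u.map g) hg

section Geodesics

variable {X : Type*} [MetricSpace X] {δ : ℝ}

namespace IsGeodesicSeg

variable {f : ℝ → X} {x y : X}

lemma dist_left (h : IsGeodesicSeg f x y) {s : ℝ} (hs : s ∈ Icc 0 (dist x y)) :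
    dist x (f s) = s := by
  have := h.2.2 0 ⟨le_rfl, dist_nonneg⟩ s hs
  rwa [h.1, zero_sub, abs_neg, abs_of_nonneg hs.1] at this

lemma symm (h : IsGeodesicSeg f x y) : IsGeodesicSeg (fun t => f (dist x y - t)) y x := by
  refine ⟨by simpa using h.2.1, by simpa [dist_comm y x] using h.1, ?_⟩
  intro s hs t ht
  rw [dist_comm y x] at hs ht
  rw [h.2.2 _ ⟨by linarith [hs.2], by linarith [hs.1]⟩ _ ⟨by linarith [ht.2], by linarith [ht.1]⟩,
    abs_sub_comm]
  ring_nf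

end IsGeodesicSeg

namespace IsGeodesicRay

variable {c : ℝ → X}

lemma dist_zero (h : IsGeodesicRay c) {t : ℝ} (ht : 0 ≤ t) : dist (c 0) (c t) = t := by
  rw [h 0 self_mem_Ici t ht, zero_sub, abs_neg, abs_of_nonneg ht]

lemma isGeodesicSeg (h : IsGeodesicRay c) {T : ℝ} (hT : 0 ≤ T) :
    IsGeodesicSeg c (c 0) (c T) := by
  refine ⟨rfl, by rw [h.dist_zero hT], ?_⟩
  rw [h.dist_zero hT]
  exact fun s hs t ht => h s hs.1 t ht.1

lemma tendsto_dist_atTop (h : IsGeodesicRay c) (x : X) :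
    Tendsto (fun n : ℕ => dist x (c n)) atTop atTop := by
  refine tendsto_atTop_mono (fun n => ?_)
    (tendsto_atTop_add_const_right _ (-dist (c 0) x) tendsto_natCast_atTop_atTop)
  have := dist_triangle (c 0) x (c n)
  rw [h.dist_zero (Nat.cast_nonneg n)] at this
  linarith

end IsGeodesicRay

def IsSegment (S : Set X) (x y : X) : Prop :=
  ∃ f : ℝ → X, IsGeodesicSeg f x y ∧ f '' Icc 0 (dist x y) = S

namespace IsSegment

variable {S : Set X} {x y p : X}

lemma symm (h : IsSegment S x y) : IsSegment S y x := by
  obtain ⟨f, hf, rfl⟩ := h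
  refine ⟨_, hf.symm, ?_⟩
  rw [dist_comm y x, ← image_image f (fun t => dist x y - t), image_const_sub_Icc]
  simp

lemma dist_le (h : IsSegment S x y) (hp : p ∈ S) : dist x p ≤ dist x y := by
  obtain ⟨f, hf, rfl⟩ := h
  obtain ⟨s, hs, rfl⟩ := hp
  rw [hf.dist_left hs]
  exact hs.2

end IsSegment

lemma IsGeodesicRay.isSegment {c : ℝ → X} (h : IsGeodesicRay c) {T : ℝ} (hT : 0 ≤ T) :
    IsSegment (c '' Icc 0 T) (c 0) (c T) :=
  ⟨c, h.isGeodesicSeg hT, by rw [h.dist_zero hT]⟩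

lemma ThinTriangles.exists_near (hthin : ThinTriangles X δ) {x y z p : X}
    {Sxy Syz Sxz : Set X} (hxy : IsSegment Sxy x y) (hyz : IsSegment Syz y z)
    (hxz : IsSegment Sxz x z) (hp : p ∈ Sxy) : ∃ q ∈ Syz ∪ Sxz, dist p q ≤ δ := by
  obtain ⟨fxy, hfxy, rfl⟩ := hxy
  obtain ⟨fyz, hfyz, rfl⟩ := hyz
  obtain ⟨fxz, hfxz, rfl⟩ := hxz
  exact hthin x y z fxy fyz fxz hfxy hfyz hfxz p hp

lemma AsympRays.symm {a b : ℝ → X} (ha : IsGeodesicRay a) (hb : IsGeodesicRay b)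
    (h : AsympRays a b) : AsympRays b a := by
  obtain ⟨K, hK⟩ := h
  refine ⟨dist (a 0) (b 0) + 2 * K, fun t ht => ⟨t, ht, ?_⟩⟩
  obtain ⟨s, hs, hts⟩ := hK t ht
  have hta := dist_triangle4 (a 0) (b 0) (b s) (a t)
  have hsb := dist_triangle4 (b 0) (a 0) (a t) (b s)
  rw [ha.dist_zero ht, hb.dist_zero hs, dist_comm (b s)] at hta
  rw [ha.dist_zero ht, hb.dist_zero hs, dist_comm (b 0)] at hsb
  calc dist (b t) (a t) ≤ dist (b t) (b s) + dist (b s) (a t) := dist_triangle _ _ _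
    _ = |t - s| + dist (a t) (b s) := by rw [hb t ht s hs, dist_comm]
    _ ≤ dist (a 0) (b 0) + 2 * K := by
      have : |t - s| ≤ dist (a 0) (b 0) + K := abs_sub_le_iff.2 ⟨by linarith, by linarith⟩
      linarith

lemma AsympRays.trans {a b c : ℝ → X} (hab : AsympRays a b) (hbc : AsympRays b c) :
    AsympRays a c := by
  obtain ⟨K, hK⟩ := hab
  obtain ⟨L, hL⟩ := hbc
  refine ⟨K + L, fun t ht => ?_⟩
  obtain ⟨s, hs, hts⟩ := hK t ht
  obtain ⟨r, hr, hsr⟩ := hL s hs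
  exact ⟨r, hr, (dist_triangle _ (b s) _).trans (add_le_add hts hsr)⟩

lemma GeodesicSpace.exists_isSegment (hgeo : GeodesicSpace X) (x y : X) :
    ∃ S, IsSegment S x y :=
  let ⟨f, hf⟩ := hgeo x y
  ⟨_, f, hf, rfl⟩

section Limit

variable (u : Ultrafilter ℕ) {x : X} {Y : ℕ → X}

lemma exists_dist_le_of_eventually_near (hu : (u : Filter ℕ) ≤ atTop)
    (hY : Tendsto (fun n => dist x (Y n)) atTop atTop) {f : ℕ → ℝ → X}
    (hf : ∀ n, IsGeodesicSeg (f n) x (Y n)) {ρ : ℝ → X}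
    (hρ : ∀ t, 0 ≤ t → Tendsto (fun n => f n t) u (𝓝 (ρ t))) {y : X} {B : ℝ}
    (hnear : ∀ᶠ n in u, ∃ s ∈ Icc 0 (dist x (Y n)), dist y (f n s) ≤ B) :
    ∃ t, 0 ≤ t ∧ dist y (ρ t) ≤ B := by
  obtain ⟨s, hs⟩ := hnear.choice
  have hbdd : ∀ᶠ n in u, s n ∈ Icc 0 (dist x y + B) := hs.mono fun n ⟨hsn, hyn⟩ => by
    have := dist_triangle x y (f n (s n))
    rw [(hf n).dist_left hsn] at this
    exact ⟨hsn.1, by linarith⟩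
  obtain ⟨t, ht, hst⟩ := isCompact_Icc.exists_tendsto_ultrafilter u hbdd
  have hdist : ∀ᶠ n in u, dist y (f n t) ≤ B + |s n - t| := by
    filter_upwards [hs, hu (hY.eventually_ge_atTop t)] with n ⟨hsn, hyn⟩ htn
    calc dist y (f n t) ≤ dist y (f n (s n)) + dist (f n (s n)) (f n t) := dist_triangle _ _ _
      _ ≤ B + |s n - t| := by rw [(hf n).2.2 _ hsn t ⟨ht.1, htn⟩]; linarith
  have hlim := le_of_tendsto_of_tendsto (tendsto_const_nhds.dist (hρ t ht.1))
    (tendsto_const_nhds.add (hst.sub_const t).abs) hdist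
  exact ⟨t, ht.1, by simpa using hlim⟩

variable [ProperSpace X]

lemma exists_isGeodesicRay_tendsto (hu : (u : Filter ℕ) ≤ atTop)
    (hY : Tendsto (fun n => dist x (Y n)) atTop atTop) {f : ℕ → ℝ → X}
    (hf : ∀ n, IsGeodesicSeg (f n) x (Y n)) :
    ∃ ρ : ℝ → X, IsGeodesicRay ρ ∧ ρ 0 = x ∧
      ∀ t, 0 ≤ t → Tendsto (fun n => f n t) u (𝓝 (ρ t)) := by
  have hlarge : ∀ t, ∀ᶠ n in u, t ≤ dist x (Y n) := fun t => hu (hY.eventually_ge_atTop t)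
  have hconv : ∀ t, 0 ≤ t → ∃ a, Tendsto (fun n => f n t) u (𝓝 a) := fun t ht =>
    let ⟨a, _, ha⟩ := (isCompact_closedBall x t).exists_tendsto_ultrafilter u <|
      (hlarge t).mono fun n hn => by rw [mem_closedBall, dist_comm, (hf n).dist_left ⟨ht, hn⟩]
    ⟨a, ha⟩
  have : Nonempty X := ⟨x⟩
  choose! ρ hρ using hconv
  refine ⟨ρ, fun s hs t ht => ?_, ?_, hρ⟩
  · refine tendsto_nhds_unique ((hρ s hs).dist (hρ t ht)) (tendsto_const_nhds.congr' ?_)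
    filter_upwards [hlarge s, hlarge t] with n hsn htn
    exact ((hf n).2.2 s ⟨hs, hsn⟩ t ⟨ht, htn⟩).symm
  · refine tendsto_nhds_unique (hρ 0 le_rfl) ?_
    simp only [(hf _).1, tendsto_const_nhds]

lemma exists_isGeodesicRay_near (hu : (u : Filter ℕ) ≤ atTop)
    (hY : Tendsto (fun n => dist x (Y n)) atTop atTop) {A : ℕ → Set X}
    (hA : ∀ n, IsSegment (A n) x (Y n)) {y : X} {B : ℝ}
    (hnear : ∀ᶠ n in u, ∃ q ∈ A n, dist y q ≤ B) :
    ∃ ρ : ℝ → X, IsGeodesicRay ρ ∧ ρ 0 = x ∧ ∃ t, 0 ≤ t ∧ dist y (ρ t) ≤ B := by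
  choose f hf hfA using hA
  obtain ⟨ρ, hρ, hρx, hρt⟩ := exists_isGeodesicRay_tendsto u hu hY hf
  refine ⟨ρ, hρ, hρx, exists_dist_le_of_eventually_near u hu hY hf hρt ?_⟩
  simpa only [← hfA, exists_mem_image] using hnear

end Limit

lemma exists_asympRays [ProperSpace X] (hgeo : GeodesicSpace X) (hthin : ThinTriangles X δ)
    (x : X) {c : ℝ → X} (hc : IsGeodesicRay c) :
    ∃ ρ : ℝ → X, IsGeodesicRay ρ ∧ ρ 0 = x ∧ AsympRays ρ c := by
  obtain ⟨u, hu⟩ := exists_ultrafilter_le (atTop : Filter ℕ)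
  choose f hf using fun n : ℕ => hgeo x (c n)
  have hY := hc.tendsto_dist_atTop x
  obtain ⟨ρ, hρ, hρx, hρt⟩ := exists_isGeodesicRay_tendsto u hu hY hf
  obtain ⟨S, hS⟩ := hgeo.exists_isSegment x (c 0)
  refine ⟨ρ, hρ, hρx, δ + dist x (c 0) + 1, fun t ht => ?_⟩
  have hlarge : ∀ᶠ n : ℕ in u, t ≤ dist x (c n) := hu (hY.eventually_ge_atTop t)
  have hnear : ∀ᶠ n : ℕ in u, dist (f n t) (ρ t) < 1 := hρt t ht (ball_mem_nhds _ one_pos)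
  obtain ⟨n, htn, hρn⟩ := (hlarge.and hnear).exists
  rw [dist_comm] at hρn
  -- `ρ t` is `1`-close to `f n t`, which the triangle `x, c n, c 0` puts near `c`
  obtain ⟨q, hq | hq, hpq⟩ := hthin.exists_near ⟨f n, hf n, rfl⟩
    (hc.isSegment n.cast_nonneg).symm hS ⟨t, ⟨ht, htn⟩, rfl⟩
  · obtain ⟨s, hs, rfl⟩ := hq
    have := dist_nonneg (x := x) (y := c 0)
    exact ⟨s, hs.1, by linarith [dist_triangle (ρ t) (f n t) (c s)]⟩
  · have hq0 : dist q (c 0) ≤ dist x (c 0) := by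
      rw [dist_comm, dist_comm x]; exact hS.symm.dist_le hq
    exact ⟨0, le_rfl, by linarith [dist_triangle4 (ρ t) (f n t) q (c 0)]⟩

def SeparatedBeyond (r K : ℝ) (γ₁ γ₂ : ℝ → X) : Prop :=
  ∀ T, K ≤ T → ∀ s, 0 ≤ s → r < dist (γ₁ T) (γ₂ s)

lemma exists_separatedBeyond_of_not_asympRays (hgeo : GeodesicSpace X)
    (hthin : ThinTriangles X δ) {γ₁ γ₂ : ℝ → X} (h₁ : IsGeodesicRay γ₁)
    (h₂ : IsGeodesicRay γ₂) (h₀ : γ₂ 0 = γ₁ 0) (hna : ¬ AsympRays γ₁ γ₂) :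
    ∃ K, 0 ≤ K ∧ SeparatedBeyond (2 * δ) K γ₁ γ₂ := by
  unfold SeparatedBeyond
  by_contra! hclose
  refine hna ⟨3 * δ, fun t ht => ?_⟩
  obtain ⟨T, htT, s, hs, hTs⟩ := hclose t ht
  obtain ⟨S, hS⟩ := hgeo.exists_isSegment (γ₁ T) (γ₂ s)
  obtain ⟨q, hq | hq, hpq⟩ := hthin.exists_near (h₁.isSegment (ht.trans htT)) hS
    (h₀ ▸ h₂.isSegment hs) ⟨t, ⟨ht, htT⟩, rfl⟩
  · have hqs : dist q (γ₂ s) ≤ dist (γ₁ T) (γ₂ s) := by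
      rw [dist_comm, dist_comm (γ₁ T)]; exact hS.symm.dist_le hq
    exact ⟨s, hs, by linarith [dist_triangle (γ₁ t) q (γ₂ s)]⟩
  · obtain ⟨σ, hσ, rfl⟩ := hq
    exact ⟨σ, hσ.1, by linarith [dist_nonneg (x := γ₁ t) (y := γ₂ σ)]⟩

section DivergentRays

variable {w x y : X} {γ₁ γ₂ c : ℝ → X} {K C t₀ n : ℝ} {A₁ A₂ : Set X}

lemma exists_near_basepoint (hgeo : GeodesicSpace X) (hthin : ThinTriangles X δ) (hδ : 0 ≤ δ)
    (h₁ : IsGeodesicRay γ₁) (h₂ : IsGeodesicRay γ₂) (hw₁ : γ₁ 0 = w) (hw₂ : γ₂ 0 = w)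
    (hK₀ : 0 ≤ K) (hK : SeparatedBeyond (2 * δ) K γ₁ γ₂) (hn : K ≤ n)
    (hA₁ : IsSegment A₁ x (γ₁ n)) (hA₂ : IsSegment A₂ x (γ₂ n)) :
    ∃ q ∈ A₁ ∪ A₂, dist w q ≤ K + 2 * δ := by
  have hn₀ : 0 ≤ n := hK₀.trans hn
  obtain ⟨B, hB⟩ := hgeo.exists_isSegment (γ₁ n) (γ₂ n)
  have hs₁ : IsSegment (γ₁ '' Icc 0 n) w (γ₁ n) := hw₁ ▸ h₁.isSegment hn₀
  have hs₂ : IsSegment (γ₂ '' Icc 0 n) w (γ₂ n) := hw₂ ▸ h₂.isSegment hn₀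
  -- `γ₁ K` is more than `2δ` away from `γ₂`, so it is `δ`-close to `[γ₁ n, γ₂ n]`
  obtain ⟨m, hm | hm, hKm⟩ := hthin.exists_near hs₁ hB hs₂ ⟨K, ⟨hK₀, hn⟩, rfl⟩
  · obtain ⟨q, hq, hmq⟩ := hthin.exists_near hB hA₂.symm hA₁.symm hm
    have hwK : dist w (γ₁ K) = K := hw₁ ▸ h₁.dist_zero hK₀
    exact ⟨q, Or.symm hq, by linarith [dist_triangle4 w (γ₁ K) m q]⟩
  · obtain ⟨τ, hτ, rfl⟩ := hm
    linarith [hK K le_rfl τ hτ.1]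

lemma exists_near_of_mem_segment (hgeo : GeodesicSpace X) (hthin : ThinTriangles X δ)
    (hδ : 0 ≤ δ) (h₁ : IsGeodesicRay γ₁) (h₂ : IsGeodesicRay γ₂) (hw₁ : γ₁ 0 = w)
    (hw₂ : γ₂ 0 = w) (hK₀ : 0 ≤ K)
    (hK : SeparatedBeyond (2 * δ) K γ₁ γ₂) (hn : K ≤ n)
    (hA₁ : IsSegment A₁ x (γ₁ n)) (hA₂ : IsSegment A₂ x (γ₂ n)) {S : Set X}
    (hS : IsSegment S w x) {z : X} (hz : z ∈ S) :
    ∃ q ∈ A₁ ∪ A₂, dist z q ≤ 2 * K + 3 * δ := by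
  have hn₀ : 0 ≤ n := hK₀.trans hn
  obtain ⟨q₁, hq₁ | hq₁, hzq₁⟩ := hthin.exists_near hS hA₁ (hw₁ ▸ h₁.isSegment hn₀) hz
  · exact ⟨q₁, Or.inl hq₁, by linarith⟩
  obtain ⟨q₂, hq₂ | hq₂, hzq₂⟩ := hthin.exists_near hS hA₂ (hw₂ ▸ h₂.isSegment hn₀) hz
  · exact ⟨q₂, Or.inr hq₂, by linarith⟩
  obtain ⟨τ₁, hτ₁, rfl⟩ := hq₁
  obtain ⟨τ₂, hτ₂, rfl⟩ := hq₂
  -- `z` is `δ`-close to both rays, which only happens within `K + δ` of `w`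
  have hτ₁K : τ₁ < K := by
    by_contra! hKτ₁
    linarith [hK τ₁ hKτ₁ τ₂ hτ₂.1, dist_triangle (γ₁ τ₁) z (γ₂ τ₂), dist_comm z (γ₁ τ₁)]
  have hwτ₁ : dist w (γ₁ τ₁) = τ₁ := hw₁ ▸ h₁.dist_zero hτ₁.1
  obtain ⟨q, hq, hwq⟩ :=
    exists_near_basepoint hgeo hthin hδ h₁ h₂ hw₁ hw₂ hK₀ hK hn hA₁ hA₂
  refine ⟨q, hq, ?_⟩
  linarith [dist_triangle4 z (γ₁ τ₁) w q, dist_comm z (γ₁ τ₁), dist_comm (γ₁ τ₁) w]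


lemma exists_near_segments (hgeo : GeodesicSpace X) (hthin : ThinTriangles X δ) (hδ : 0 ≤ δ)
    (h₁ : IsGeodesicRay γ₁) (h₂ : IsGeodesicRay γ₂) (hw₁ : γ₁ 0 = w) (hw₂ : γ₂ 0 = w)
    (hK₀ : 0 ≤ K) (hK : SeparatedBeyond (2 * δ) K γ₁ γ₂)
    (hc : IsGeodesicRay c) (hw : c 0 = w) (ht₀ : 0 ≤ t₀) (hy : dist y (c t₀) ≤ C)
    (hn : max t₀ K ≤ n) {A₀ A₁ A₂ : Set X} (hA₀ : IsSegment A₀ x (c n))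
    (hA₁ : IsSegment A₁ x (γ₁ n)) (hA₂ : IsSegment A₂ x (γ₂ n)) :
    ∃ q ∈ A₀ ∪ (A₁ ∪ A₂), dist y q ≤ C + 2 * K + 4 * δ := by
  obtain ⟨S, hS⟩ := hgeo.exists_isSegment w x
  have ht₀n : t₀ ≤ n := le_of_max_le_left hn
  have hs : IsSegment (c '' Icc 0 n) w (c n) := hw ▸ hc.isSegment (ht₀.trans ht₀n)
  obtain ⟨z, hz | hz, hcz⟩ := hthin.exists_near hs hA₀.symm hS ⟨t₀, ⟨ht₀, ht₀n⟩, rfl⟩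
  · exact ⟨z, Or.inl hz, by linarith [dist_triangle y (c t₀) z]⟩
  · obtain ⟨q, hq, hzq⟩ := exists_near_of_mem_segment hgeo hthin hδ h₁ h₂ hw₁ hw₂ hK₀ hK
      (le_of_max_le_right hn) hA₁ hA₂ hS hz
    exact ⟨q, Or.inr hq, by linarith [dist_triangle4 y (c t₀) z q]⟩

lemma exists_isGeodesicRay_near_of_visual [ProperSpace X] (hgeo : GeodesicSpace X)
    (hthin : ThinTriangles X δ) (hδ : 0 ≤ δ) (h₁ : IsGeodesicRay γ₁) (h₂ : IsGeodesicRay γ₂)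
    (hw₁ : γ₁ 0 = w) (hw₂ : γ₂ 0 = w) (hK₀ : 0 ≤ K)
    (hK : SeparatedBeyond (2 * δ) K γ₁ γ₂)
    (hc : IsGeodesicRay c) (hw : c 0 = w) (ht₀ : 0 ≤ t₀) (hy : dist y (c t₀) ≤ C) (x : X) :
    ∃ ρ : ℝ → X, IsGeodesicRay ρ ∧ ρ 0 = x ∧ ∃ t, 0 ≤ t ∧ dist y (ρ t) ≤ C + 2 * K + 4 * δ := by
  obtain ⟨u, hu⟩ := exists_ultrafilter_le (atTop : Filter ℕ)
  choose A₀ hA₀ using fun n : ℕ => hgeo.exists_isSegment x (c n)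
  choose A₁ hA₁ using fun n : ℕ => hgeo.exists_isSegment x (γ₁ n)
  choose A₂ hA₂ using fun n : ℕ => hgeo.exists_isSegment x (γ₂ n)
  set B := C + 2 * K + 4 * δ
  have hnear : ∀ᶠ n : ℕ in u, (∃ q ∈ A₀ n, dist y q ≤ B) ∨
      (∃ q ∈ A₁ n, dist y q ≤ B) ∨ (∃ q ∈ A₂ n, dist y q ≤ B) := by
    filter_upwards [hu (tendsto_natCast_atTop_atTop.eventually_ge_atTop (max t₀ K))] with n hn
    obtain ⟨q, hq | hq | hq, hyq⟩ := exists_near_segments hgeo hthin hδ h₁ h₂ hw₁ hw₂ hK₀ hK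
      hc hw ht₀ hy hn (hA₀ n) (hA₁ n) (hA₂ n)
    exacts [Or.inl ⟨q, hq, hyq⟩, Or.inr (Or.inl ⟨q, hq, hyq⟩), Or.inr (Or.inr ⟨q, hq, hyq⟩)]
  rcases u.eventually_or.1 hnear with h | h
  · exact exists_isGeodesicRay_near u hu (hc.tendsto_dist_atTop x) hA₀ h
  rcases u.eventually_or.1 h with h | h
  · exact exists_isGeodesicRay_near u hu (h₁.tendsto_dist_atTop x) hA₁ h
  · exact exists_isGeodesicRay_near u hu (h₂.tendsto_dist_atTop x) hA₂ h

end DivergentRays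

end Geodesics

/-- A visual proper δ-hyperbolic geodesic space with at least two boundary points is
taut: there is `C' < ∞` such that every `y ∈ X` lies within `C'` of a geodesic emanating
from any prescribed point of `X ∪ ∂X` (a ray from the point, when the point is in `X`;
a geodesic tending to the point, when the point is ideal). -/
theorem stmt_19 {X : Type*} [MetricSpace X] [ProperSpace X]
    (δ : ℝ) (hδ : 0 ≤ δ) (hgeo : GeodesicSpace X) (hthin : ThinTriangles X δ)
    (w : X) (C : ℝ)
    -- `X` is visual with basepoint `w` and constant `C`:
    (hvis : ∀ x : X, ∃ c : ℝ → X, IsGeodesicRay c ∧ c 0 = w ∧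
      ∃ t, 0 ≤ t ∧ dist x (c t) ≤ C)
    -- `∂X` has at least two points: there are two non-asymptotic geodesic rays
    (hbdry : ∃ c₁ c₂ : ℝ → X, IsGeodesicRay c₁ ∧ IsGeodesicRay c₂ ∧ ¬ AsympRays c₁ c₂) :
    ∃ C' : ℝ,
      (∀ x y : X, ∃ c : ℝ → X, IsGeodesicRay c ∧ c 0 = x ∧
        ∃ t, 0 ≤ t ∧ dist y (c t) ≤ C') ∧
      (∀ c₀ : ℝ → X, IsGeodesicRay c₀ → ∀ y : X, ∃ c : ℝ → X, IsGeodesicRay c ∧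
        AsympRays c c₀ ∧ ∃ t, 0 ≤ t ∧ dist y (c t) ≤ C') := by
  obtain ⟨c₁, c₂, hc₁, hc₂, hna⟩ := hbdry
  obtain ⟨γ₁, h₁, hw₁, hγc₁⟩ := exists_asympRays hgeo hthin w hc₁
  obtain ⟨γ₂, h₂, hw₂, hγc₂⟩ := exists_asympRays hgeo hthin w hc₂
  have hnaγ : ¬ AsympRays γ₁ γ₂ := fun h => hna ((hγc₁.symm h₁ hc₁).trans (h.trans hγc₂))
  obtain ⟨K, hK₀, hK⟩ :=
    exists_separatedBeyond_of_not_asympRays hgeo hthin h₁ h₂ (hw₂.trans hw₁.symm) hnaγ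
  have hC : 0 ≤ C := by
    obtain ⟨c, -, -, t, -, hwt⟩ := hvis w
    exact dist_nonneg.trans hwt
  refine ⟨C + 2 * K + 4 * δ, fun x y => ?_, fun c₀ hc₀ y => ?_⟩
  · obtain ⟨c, hc, hw, t₀, ht₀, hy⟩ := hvis y
    exact exists_isGeodesicRay_near_of_visual hgeo hthin hδ h₁ h₂ hw₁ hw₂ hK₀ hK hc hw ht₀ hy x
  · obtain ⟨c, hc, hcy, hcc₀⟩ := exists_asympRays hgeo hthin y hc₀
    exact ⟨c, hc, hcc₀, 0, le_rfl, by rw [hcy, dist_self]; positivity⟩
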